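/- Let l, l1, l2 be natural numbers with 1 ≤ l2 ≤ l1 < l and set C = l1 − l2. Let g, G : ℕ → ℕ satisfy g(k) + 1 ≤ g(k+1) and G(k) ≥ 1 for all k ≥ 1, and suppose that for every k ≥ 1 the integer identity G(k) = (l − l_j)·g(k) − l + 2·l1 + C·Σ_{m=1}^{k−1} (−1)^m g(m) holds, where l_j = l1 if k is odd and l_j = l2 if k is even. Then g and G have the same growth type: G ⪯ g and g ⪯ G. -/
import Mathlib


/-- `f ⪯ g`: there are `α β : ℕ` with `f k ≤ α * g (k + β)` for all `k ≥ 1`. -/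
def GrowthLE (f g : ℕ → ℕ) : Prop :=
  ∃ α β : ℕ, ∀ k : ℕ, 1 ≤ k → f k ≤ α * g (k + β)

/-- Let `1 ≤ l2 ≤ l1 < l` and `C = l1 - l2`.  Suppose `g` is strictly increasing
(in the sense `g k + 1 ≤ g (k+1)` for `k ≥ 1`), `G k ≥ 1` for `k ≥ 1`, and for each
`k ≥ 1` the integer identity
`G k = (l - l_j) * g k - l + 2 * l1 + C * ∑_{m=1}^{k-1} (-1)^m g m`
holds, where `l_j = l1` for odd `k` and `l_j = l2` for even `k`.
Then `g` and `G` have the same growth type. -/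
theorem growth_type_eq_of_identity
    (l l1 l2 : ℕ) (h1 : 1 ≤ l2) (h2 : l2 ≤ l1) (h3 : l1 < l)
    (g G : ℕ → ℕ)
    (hg : ∀ k : ℕ, 1 ≤ k → g k + 1 ≤ g (k + 1))
    (hG : ∀ k : ℕ, 1 ≤ k → 1 ≤ G k)
    (hid : ∀ k : ℕ, 1 ≤ k →
      (G k : ℤ) =
        ((l : ℤ) - (if k % 2 = 1 then (l1 : ℤ) else (l2 : ℤ))) * (g k : ℤ)
          - (l : ℤ) + 2 * (l1 : ℤ)
          + ((l1 : ℤ) - (l2 : ℤ)) *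
              ∑ m ∈ Finset.Icc 1 (k - 1), (-1 : ℤ) ^ m * (g m : ℤ)) :
    GrowthLE G g ∧ GrowthLE g G := by
  -- sum recursion
  have hsum : ∀ k : ℕ, 1 ≤ k →
      (∑ m ∈ Finset.Icc 1 ((k+1) - 1), (-1 : ℤ) ^ m * (g m : ℤ))
        = (∑ m ∈ Finset.Icc 1 (k - 1), (-1 : ℤ) ^ m * (g m : ℤ))
            + (-1 : ℤ) ^ k * (g k : ℤ) := by
    intro k hk
    obtain ⟨n, rfl⟩ : ∃ n, k = n + 1 := ⟨k - 1, (Nat.succ_pred_eq_of_pos hk).symm⟩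
    simp only [Nat.add_sub_cancel]
    exact Finset.sum_Icc_succ_top (by omega) _
  -- key difference identity
  have key : ∀ k : ℕ, 1 ≤ k → (G (k+1) : ℤ) - (G k : ℤ)
      = ((l : ℤ) - (if (k+1) % 2 = 1 then (l1 : ℤ) else (l2 : ℤ)))
          * ((g (k+1) : ℤ) - (g k : ℤ)) := by
    intro k hk
    have e1 := hid k hk
    have e2 := hid (k+1) (by omega)
    rw [hsum k hk] at e2
    rcases Nat.even_or_odd k with he | ho
    · have p1 : k % 2 = 0 := Nat.even_iff.mp he
      have p2 : (k+1) % 2 = 1 := by omega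
      rw [he.neg_one_pow] at e2
      rw [if_neg (by omega)] at e1
      rw [if_pos p2] at e2 ⊢
      linear_combination e2 - e1
    · have p1 : k % 2 = 1 := Nat.odd_iff.mp ho
      have p2 : ¬ ((k+1) % 2 = 1) := by omega
      rw [ho.neg_one_pow] at e2
      rw [if_pos p1] at e1
      rw [if_neg p2] at e2 ⊢
      linear_combination e2 - e1
  have hlj : ∀ k : ℕ, (1 : ℤ) ≤ (if k % 2 = 1 then (l1 : ℤ) else (l2 : ℤ)) ∧
      (if k % 2 = 1 then (l1 : ℤ) else (l2 : ℤ)) ≤ (l1 : ℤ) := by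
    intro k
    have a1 : (1:ℤ) ≤ (l1:ℤ) := by exact_mod_cast h1.trans h2
    have a2 : (1:ℤ) ≤ (l2:ℤ) := by exact_mod_cast h1
    have a3 : (l2:ℤ) ≤ (l1:ℤ) := by exact_mod_cast h2
    split <;> exact ⟨by linarith, by linarith⟩
  -- lower bound: g k + 1 ≤ G k + g 1
  have lb : ∀ k : ℕ, 1 ≤ k → (g k : ℤ) + 1 ≤ (G k : ℤ) + (g 1 : ℤ) := by
    intro k hk
    induction k with
    | zero => omega
    | succ n ih =>
      rcases Nat.eq_or_lt_of_le hk with h | h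
      · have := hG 1 le_rfl
        simp only [← h]
        push_cast
        omega
      · have hn : 1 ≤ n := by omega
        have hkey := key n hn
        have hd : (0 : ℤ) ≤ (g (n+1) : ℤ) - (g n : ℤ) := by
          have := hg n hn; push_cast; omega
        have hl : (1 : ℤ) ≤ (l : ℤ) - (if (n+1) % 2 = 1 then (l1 : ℤ) else (l2 : ℤ)) := by
          have := (hlj (n+1)).2
          have : ((l1 : ℤ)) < l := by exact_mod_cast h3
          have := (hlj (n+1)).2
          linarith
        have := mul_le_mul_of_nonneg_right hl hd
        have ihn := ih hn
        rw [one_mul] at this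
        linarith [hkey, this, ihn]
  -- upper bound: G k ≤ G 1 + l * g k
  have ub : ∀ k : ℕ, 1 ≤ k → (G k : ℤ) ≤ (G 1 : ℤ) + (l : ℤ) * (g k : ℤ) := by
    intro k hk
    induction k with
    | zero => omega
    | succ n ih =>
      rcases Nat.eq_or_lt_of_le hk with h | h
      · simp only [← h]
        have : (0:ℤ) ≤ (l : ℤ) * (g 1 : ℤ) := by positivity
        linarith
      · have hn : 1 ≤ n := by omega
        have hkey := key n hn
        have hd : (0 : ℤ) ≤ (g (n+1) : ℤ) - (g n : ℤ) := by
          have := hg n hn; push_cast; omega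
        have hl : ((l : ℤ) - (if (n+1) % 2 = 1 then (l1 : ℤ) else (l2 : ℤ))) ≤ (l : ℤ) := by
          have := (hlj (n+1)).1; linarith
        have := mul_le_mul_of_nonneg_right hl hd
        have ihn := ih hn
        nlinarith
  constructor
  · -- G ⪯ g
    refine ⟨G 1 + l, 1, fun k hk => ?_⟩
    have h1' : (G k : ℤ) ≤ (G 1 : ℤ) + (l : ℤ) * (g k : ℤ) := ub k hk
    have hgk : (g k : ℤ) ≤ (g (k+1) : ℤ) := by
      have := hg k hk; push_cast; omega
    have hg1 : (1 : ℤ) ≤ (g (k+1) : ℤ) := by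
      have := hg k hk; push_cast; omega
    have : (G k : ℤ) ≤ ((G 1 : ℤ) + l) * (g (k+1) : ℤ) := by nlinarith
    exact_mod_cast this
  · -- g ⪯ G
    refine ⟨g 1 + 1, 0, fun k hk => ?_⟩
    have h1' := lb k hk
    have h2' : (1 : ℤ) ≤ (G k : ℤ) := by exact_mod_cast hG k hk
    have : (g k : ℤ) ≤ ((g 1 : ℤ) + 1) * (G (k + 0) : ℤ) := by
      simp only [Nat.add_zero]; nlinarith
    exact_mod_cast this
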